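/- arXiv:0909.1006 — 3 statements merged into one kernel-verified Lean document; each statement's English description precedes it below -/
import Mathlib

section
/- Let G be a second countable locally compact topological group with a left Haar measure μ_G, let U be a compact subgroup of G, and let π be a strongly continuous unitary representation of G on a complex Hilbert space H. Let f : G → ℝ be a continuous function with compact support such that f ≥ 0, ∫_G f dμ_G = 1, and f(u g u') = f(g) for all u, u' ∈ U and g ∈ G. Define π(f)ξ = ∫_G f(x) • (π(x)ξ) dμ_G(x). If π has almost invariant vectors, then there exists a sequence (η_n) of vectors in H^U = {ξ ∈ H : π(u)ξ = ξ for all u ∈ U} with ‖η_n‖ ≥ 1/2 for all sufficiently large n and lim_n ‖π(f)η_n − η_n‖ = 0; in particular, 1 belongs to the spectrum of the restriction of π(f) to H^U. -/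
open MeasureTheory Filter

/-- A unitary representation has almost invariant vectors if for every compact subset `Q`
and every `ε > 0` there is a unit vector moved by less than `ε` by every element of `Q`. -/
def HasAlmostInvariantVectors {G H : Type*} [Group G] [TopologicalSpace G]
    [NormedAddCommGroup H] [InnerProductSpace ℂ H]
    (π : G →* (H →L[ℂ] H)) : Prop :=
  ∀ Q : Set G, IsCompact Q → ∀ ε : ℝ, 0 < ε →
    ∃ ξ : H, ‖ξ‖ = 1 ∧ ∀ x ∈ Q, ‖π x ξ - ξ‖ < ε

/-- The subspace `H^U` of vectors fixed by every element of the subgroup `U`. -/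
def invariantSubmodule {G H : Type*} [Group G]
    [NormedAddCommGroup H] [InnerProductSpace ℂ H]
    (π : G →* (H →L[ℂ] H)) (U : Subgroup G) : Submodule ℂ H where
  carrier := {ξ : H | ∀ u ∈ U, π u ξ = ξ}
  add_mem' := by
    intro a b ha hb u hu
    simp [map_add, ha u hu, hb u hu]
  zero_mem' := by intro u hu; simp
  smul_mem' := by
    intro c x hx u hu
    simp [_root_.map_smul, hx u hu]

/-! Averaging a unit vector `ξ` against the probability density `f` moves it by at most
`sup_{x ∈ supp f} ‖π x ξ - ξ‖`, so almost invariant vectors give unit vectors `ξₙ` with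
`‖π(f) ξₙ - ξₙ‖ → 0`. Left `U`-invariance of `f` and of the Haar measure puts `ηₙ = π(f) ξₙ` in
`H^U`, and `ηₙ` is again almost fixed by `π(f)` with `‖ηₙ‖ → 1`. Such approximate eigenvectors
rule out invertibility of `1 - π(f)` on `H^U`. -/

open scoped Topology

section Averaging

variable {α E : Type*} [MeasurableSpace α] {μ : Measure α}
  [NormedAddCommGroup E] [NormedSpace ℝ E] {f : α → ℝ}

theorem norm_integral_smul_le_of_norm_le (hf_nonneg : ∀ x, 0 ≤ f x) (hf_int : ∫ x, f x ∂μ = 1)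
    {v : α → E} {C : ℝ} (hv : ∀ x ∈ Function.support f, ‖v x‖ ≤ C) :
    ‖∫ x, f x • v x ∂μ‖ ≤ C := by
  have hf : Integrable f μ := Integrable.of_integral_ne_zero (by simp [hf_int])
  calc ‖∫ x, f x • v x ∂μ‖ ≤ ∫ x, f x * C ∂μ := by
        refine norm_integral_le_of_norm_le (hf.mul_const C) (Eventually.of_forall fun x => ?_)
        rw [norm_smul, Real.norm_of_nonneg (hf_nonneg x)]
        by_cases hx : f x = 0
        · simp [hx]
        · exact mul_le_mul_of_nonneg_left (hv x hx) (hf_nonneg x)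
    _ = C := by rw [integral_mul_const, hf_int, one_mul]

theorem norm_integral_smul_sub_le [CompleteSpace E] (hf_nonneg : ∀ x, 0 ≤ f x)
    (hf_int : ∫ x, f x ∂μ = 1) {v : α → E} (hfv : Integrable (fun x => f x • v x) μ) {w : E}
    {ε : ℝ} (hv : ∀ x ∈ Function.support f, ‖v x - w‖ ≤ ε) :
    ‖∫ x, f x • v x ∂μ - w‖ ≤ ε := by
  have hf : Integrable f μ := Integrable.of_integral_ne_zero (by simp [hf_int])
  have h : ∫ x, f x • v x ∂μ - w = ∫ x, f x • (v x - w) ∂μ := by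
    simp_rw [smul_sub]
    rw [integral_sub hfv (hf.smul_const w), integral_smul_const, hf_int, one_smul]
  rw [h]
  exact norm_integral_smul_le_of_norm_le hf_nonneg hf_int hv

end Averaging

theorem integral_smul_mem_invariantSubmodule {G H : Type*} [Group G] [MeasurableSpace G]
    [MeasurableMul G] {μ : Measure G} [μ.IsMulLeftInvariant]
    [NormedAddCommGroup H] [InnerProductSpace ℂ H] [CompleteSpace H]
    (π : G →* (H →L[ℂ] H)) (U : Subgroup G) {f : G → ℝ}
    (hf : ∀ u ∈ U, ∀ g, f (u * g) = f g) {ξ : H}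
    (hfξ : Integrable (fun x => f x • π x ξ) μ) :
    ∫ x, f x • π x ξ ∂μ ∈ invariantSubmodule π U := by
  intro u hu
  calc π u (∫ x, f x • π x ξ ∂μ) = ∫ x, f x • π (u * x) ξ ∂μ := by
        rw [← (π u).integral_comp_comm hfξ]
        simp [map_mul]
    _ = ∫ x, f (u⁻¹ * (u * x)) • π (u * x) ξ ∂μ := by simp
    _ = ∫ x, f (u⁻¹ * x) • π x ξ ∂μ := integral_mul_left_eq_self (fun y => f (u⁻¹ * y) • π y ξ) u
    _ = ∫ x, f x • π x ξ ∂μ := by simp [hf u⁻¹ (inv_mem hu)]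

theorem mem_spectrum_of_tendsto_apply_sub_smul {𝕜 E : Type*} [NontriviallyNormedField 𝕜]
    [NormedAddCommGroup E] [NormedSpace 𝕜 E] {ι : Type*} {l : Filter ι} [l.NeBot]
    (a : E →L[𝕜] E) (k : 𝕜) (x : ι → E) {c : ℝ} (hc : 0 < c) (hx : ∀ᶠ i in l, c ≤ ‖x i‖)
    (hax : Tendsto (fun i => a (x i) - k • x i) l (𝓝 0)) : k ∈ spectrum 𝕜 a := by
  intro hunit
  have hx_zero : Tendsto x l (𝓝 0) := by
    rw [(ContinuousLinearMap.isHomeomorph_of_isUnit hunit).isInducing.tendsto_nhds_iff]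
    simpa [Function.comp_def, Algebra.algebraMap_eq_smul_one] using hax.neg
  obtain ⟨i, hi, hi'⟩ := (hx.and ((tendsto_norm_zero.comp hx_zero).eventually (gt_mem_nhds hc))).exists
  exact (hi.trans_lt hi').false

theorem exists_unit_seq_tendsto_integral_smul_sub {G H : Type*} [Group G] [TopologicalSpace G]
    [MeasurableSpace G] [OpensMeasurableSpace G] {μ : Measure G} [IsFiniteMeasureOnCompacts μ]
    [NormedAddCommGroup H] [InnerProductSpace ℂ H] [CompleteSpace H] (π : G →* (H →L[ℂ] H))
    (hπ_cont : ∀ ξ : H, Continuous fun g : G => π g ξ) {f : G → ℝ} (hf_cont : Continuous f)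
    (hf_supp : HasCompactSupport f) (hf_nonneg : ∀ x, 0 ≤ f x) (hf_int : ∫ x, f x ∂μ = 1)
    (halmost : HasAlmostInvariantVectors π) :
    ∃ ξ : ℕ → H, (∀ n, ‖ξ n‖ = 1) ∧
      Tendsto (fun n => ∫ x, f x • π x (ξ n) ∂μ - ξ n) atTop (𝓝 0) := by
  choose ξ hξ_norm hξ using fun n : ℕ =>
    halmost (tsupport f) hf_supp (1 / (n + 1)) Nat.one_div_pos_of_nat
  refine ⟨ξ, hξ_norm, squeeze_zero_norm (fun n => ?_) tendsto_one_div_add_atTop_nhds_zero_nat⟩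
  have hfξ : Integrable (fun x => f x • π x (ξ n)) μ :=
    (hf_cont.smul (hπ_cont _)).integrable_of_hasCompactSupport hf_supp.smul_right
  exact norm_integral_smul_sub_le hf_nonneg hf_int hfξ fun x hx => (hξ n x (subset_tsupport f hx)).le

theorem stmt2_general {G H : Type*} [Group G] [TopologicalSpace G] [IsTopologicalGroup G]
    [MeasurableSpace G] [BorelSpace G]
    (μG : Measure G) [μG.IsHaarMeasure]
    [NormedAddCommGroup H] [InnerProductSpace ℂ H] [CompleteSpace H]
    (π : G →* (H →L[ℂ] H))
    (hπ_cont : ∀ ξ : H, Continuous fun g : G => π g ξ)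
    (U : Subgroup G)
    (f : G → ℝ) (hf_cont : Continuous f) (hf_supp : HasCompactSupport f)
    (hf_nonneg : ∀ x, 0 ≤ f x) (hf_int : ∫ x, f x ∂μG = 1)
    (hf_biinv : ∀ u ∈ U, ∀ u' ∈ U, ∀ g : G, f (u * g * u') = f g)
    (T : H →L[ℂ] H)
    (hT : ∀ ξ : H, T ξ = ∫ x, f x • (π x ξ) ∂μG)
    (halmost : HasAlmostInvariantVectors π) :
    (∃ η : ℕ → H, (∀ n, η n ∈ invariantSubmodule π U) ∧
        (∃ N : ℕ, ∀ n ≥ N, (1 : ℝ) / 2 ≤ ‖η n‖) ∧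
        Tendsto (fun n => ‖T (η n) - η n‖) atTop (nhds 0)) ∧
      ∃ hinv : ∀ ξ : invariantSubmodule π U,
          T ((invariantSubmodule π U).subtypeL ξ) ∈ invariantSubmodule π U,
        (1 : ℂ) ∈ spectrum ℂ
          ((T.comp (invariantSubmodule π U).subtypeL).codRestrict
            (invariantSubmodule π U) hinv) := by
  have hT_mem (ξ : H) : T ξ ∈ invariantSubmodule π U := by
    rw [hT]
    refine integral_smul_mem_invariantSubmodule π U (fun u hu g => ?_) ?_
    · simpa using hf_biinv u hu 1 U.one_mem g
    · exact (hf_cont.smul (hπ_cont ξ)).integrable_of_hasCompactSupport hf_supp.smul_right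
  obtain ⟨ξ, hξ_norm, hξ⟩ := exists_unit_seq_tendsto_integral_smul_sub (μ := μG) π hπ_cont
    hf_cont hf_supp hf_nonneg hf_int halmost
  simp_rw [← hT] at hξ
  have hTξ_norm : ∀ᶠ n in atTop, (1 : ℝ) / 2 ≤ ‖T (ξ n)‖ := by
    filter_upwards [(tendsto_norm_zero.comp hξ).eventually (ge_mem_nhds one_half_pos)] with n hn
    have := norm_sub_norm_le (ξ n) (T (ξ n))
    rw [norm_sub_rev, hξ_norm] at this
    simp only [Function.comp_apply] at hn
    linarith
  have hTξ : Tendsto (fun n => T (T (ξ n)) - T (ξ n)) atTop (𝓝 0) := by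
    simpa [Function.comp_def] using (T.continuous.tendsto 0).comp hξ
  refine ⟨⟨fun n => T (ξ n), fun n => hT_mem _, eventually_atTop.mp hTξ_norm,
    tendsto_norm_zero.comp hTξ⟩, fun _ => hT_mem _, ?_⟩
  refine mem_spectrum_of_tendsto_apply_sub_smul _ 1 (fun n => ⟨T (ξ n), hT_mem _⟩) one_half_pos hTξ_norm ?_
  rw [tendsto_subtype_rng]
  simp only [one_smul]
  exact hTξ

theorem stmt2 {G H : Type*} [Group G] [TopologicalSpace G] [IsTopologicalGroup G]
    [LocallyCompactSpace G] [SecondCountableTopology G]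
    [MeasurableSpace G] [BorelSpace G]
    (μG : Measure G) [μG.IsHaarMeasure]
    [NormedAddCommGroup H] [InnerProductSpace ℂ H] [CompleteSpace H]
    (π : G →* (H →L[ℂ] H))
    (hπ_unitary : ∀ (g : G) (ξ : H), ‖π g ξ‖ = ‖ξ‖)
    (hπ_cont : ∀ ξ : H, Continuous fun g : G => π g ξ)
    (U : Subgroup G) (hU : IsCompact (U : Set G))
    (f : G → ℝ) (hf_cont : Continuous f) (hf_supp : HasCompactSupport f)
    (hf_nonneg : ∀ x, 0 ≤ f x) (hf_int : ∫ x, f x ∂μG = 1)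
    (hf_biinv : ∀ u ∈ U, ∀ u' ∈ U, ∀ g : G, f (u * g * u') = f g)
    (T : H →L[ℂ] H)
    (hT : ∀ ξ : H, T ξ = ∫ x, f x • (π x ξ) ∂μG)
    (halmost : HasAlmostInvariantVectors π) :
    (∃ η : ℕ → H, (∀ n, η n ∈ invariantSubmodule π U) ∧
        (∃ N : ℕ, ∀ n ≥ N, (1 : ℝ) / 2 ≤ ‖η n‖) ∧
        Tendsto (fun n => ‖T (η n) - η n‖) atTop (nhds 0)) ∧
      ∃ hinv : ∀ ξ : invariantSubmodule π U,
          T ((invariantSubmodule π U).subtypeL ξ) ∈ invariantSubmodule π U,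
        (1 : ℂ) ∈ spectrum ℂ
          ((T.comp (invariantSubmodule π U).subtypeL).codRestrict
            (invariantSubmodule π U) hinv) :=
  stmt2_general μG π hπ_cont U f hf_cont hf_supp hf_nonneg hf_int hf_biinv T hT halmost
end

section
/- For every integer k ≥ 3 there exist functions a, b, μ : ℕ → ℝ (interpreted as edge indices a(n) from vertex n to n+1 and b(n) from vertex n+1 to n on the infinite path with vertex set ℕ, and vertex measure μ) such that: a(n) > 0, b(n) > 0 and μ(n) > 0 for all n; a(n)·μ(n) = b(n)·μ(n+1) for all n (so the edge measure w(n) = a(n)·μ(n) is symmetric); a(0) = k and b(n) + a(n+1) = k for all n (so every vertex has in-degree k); ∑_{n=0}^∞ μ(n) < ∞; and for every ε > 0 there exists a finite nonempty subset S ⊆ ℕ with μ(S) ≤ (∑_{n} μ(n))/2 and w(∂S) < ε·μ(S), where μ(S) = ∑_{n ∈ S} μ(n) and w(∂S) = ∑ w(n) over all n such that exactly one of n, n+1 lies in S. In other words, there exists a k-regular diagram of finite volume which is not an expander diagram. -/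
/-!
Put positive weights `w n` on the edges of the path and let each vertex carry the total weight of
its edges divided by `k`; the indices `a n = w n / μ n`, `b n = w n / μ (n + 1)` then make the
diagram `k`-regular with edge measure `w`, and its volume is `2 ∑ w / k`. With the telescoping
weights `w n = 1 / ((n + 1) (n + 2))` the interval `S = [p + 1, 2p + 2]` has measure of order
`1 / (k p)` but boundary of order `1 / p²`, so the Cheeger ratio of `S` is `O(k / p)`, while
`S` avoids the two vertices `0, 1` that already carry half of the volume.
-/

open Finset

noncomputable section

namespace PathDiagram

def vertexMeasure (k : ℝ) (w : ℕ → ℝ) : ℕ → ℝ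
  | 0 => w 0 / k
  | n + 1 => (w n + w (n + 1)) / k

section

variable {k : ℝ} {w : ℕ → ℝ}

lemma vertexMeasure_pos (hk : 0 < k) (hw : ∀ n, 0 < w n) (n : ℕ) : 0 < vertexMeasure k w n := by
  cases n with
  | zero => exact div_pos (hw 0) hk
  | succ n => exact div_pos (add_pos (hw n) (hw (n + 1))) hk

lemma div_le_vertexMeasure (hk : 0 < k) (hw : ∀ n, 0 ≤ w n) (n : ℕ) :
    w n / k ≤ vertexMeasure k w n := by
  cases n with
  | zero => rfl
  | succ n => exact div_le_div_of_nonneg_right (le_add_of_nonneg_left (hw n)) hk.le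

lemma div_vertexMeasure_zero (hk : k ≠ 0) (hw : w 0 ≠ 0) : w 0 / vertexMeasure k w 0 = k := by
  simp only [vertexMeasure]
  field_simp

lemma div_vertexMeasure_succ_add (hk : k ≠ 0) {n : ℕ} (hw : w n + w (n + 1) ≠ 0) :
    w n / vertexMeasure k w (n + 1) + w (n + 1) / vertexMeasure k w (n + 1) = k := by
  rw [← add_div]
  simp only [vertexMeasure]
  field_simp

lemma hasSum_vertexMeasure {σ : ℝ} (hw : HasSum w σ) :
    HasSum (vertexMeasure k w) (2 * σ / k) := by
  have hshift : HasSum (fun n => w (n + 1)) (σ - w 0) := by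
    simpa using (hasSum_nat_add_iff' 1).2 hw
  have hsucc : HasSum (fun n => vertexMeasure k w (n + 1)) ((σ + (σ - w 0)) / k) :=
    (hw.add hshift).div_const k
  convert hsucc.zero_add using 1
  simp only [vertexMeasure]
  ring

lemma sum_vertexMeasure_le_half (hk : 0 < k) (hw : ∀ n, 0 ≤ w n) {σ : ℝ} (hσ : HasSum w σ)
    (hw₀ : σ ≤ 2 * w 0) {s : Finset ℕ} (h₀ : 0 ∉ s) (h₁ : 1 ∉ s) :
    ∑ n ∈ s, vertexMeasure k w n ≤ 2 * σ / k / 2 := by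
  have hμ : ∀ n, 0 ≤ vertexMeasure k w n := fun n =>
    (div_nonneg (hw n) hk.le).trans (div_le_vertexMeasure hk hw n)
  have hle := sum_le_hasSum (insert 0 (insert 1 s)) (fun n _ => hμ n) (hasSum_vertexMeasure hσ)
  rw [sum_insert (by simp [h₀]), sum_insert h₁] at hle
  have hfirst : σ / k ≤ vertexMeasure k w 0 + vertexMeasure k w 1 := by
    simp only [vertexMeasure, zero_add, ← add_div]
    exact div_le_div_of_nonneg_right (by linarith [hw 1]) hk.le
  linarith [show 2 * σ / k / 2 = σ / k by ring]

end

lemma tsum_ite_boundary_Icc {α : Type*} [AddCommMonoid α] [TopologicalSpace α] (f : ℕ → α)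
    {m M : ℕ} (h : m < M) :
    (∑' n : ℕ, if (n ∈ Icc (m + 1) M ∧ n + 1 ∉ Icc (m + 1) M) ∨
        (n ∉ Icc (m + 1) M ∧ n + 1 ∈ Icc (m + 1) M) then f n else 0) = f m + f M := by
  rw [tsum_eq_sum (s := {m, M}), sum_pair h.ne]
  · simp only [mem_Icc]
    rw [if_pos (by omega), if_pos (by omega)]
  · intro n hn
    simp only [mem_insert, mem_singleton] at hn
    simp only [mem_Icc]
    rw [if_neg (by omega)]

def edgeWeight (n : ℕ) : ℝ := 1 / ((n + 1) * (n + 2))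

lemma edgeWeight_pos (n : ℕ) : 0 < edgeWeight n := by
  unfold edgeWeight
  positivity

lemma edgeWeight_eq_sub (n : ℕ) :
    edgeWeight n = -(1 / (((n + 1 : ℕ) : ℝ) + 1)) - -(1 / ((n : ℝ) + 1)) := by
  unfold edgeWeight
  push_cast
  field_simp
  ring

lemma sum_Ico_edgeWeight {m M : ℕ} (h : m ≤ M) :
    ∑ n ∈ Ico m M, edgeWeight n = 1 / ((m : ℝ) + 1) - 1 / ((M : ℝ) + 1) := by
  simp only [edgeWeight_eq_sub]
  rw [sum_Ico_sub (fun n : ℕ => -(1 / ((n : ℝ) + 1))) h]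
  ring

lemma hasSum_edgeWeight : HasSum edgeWeight 1 := by
  rw [hasSum_iff_tendsto_nat_of_nonneg (fun n => (edgeWeight_pos n).le)]
  simp only [range_eq_Ico, sum_Ico_edgeWeight (Nat.zero_le _)]
  simpa using (tendsto_one_div_add_atTop_nhds_zero_nat (𝕜 := ℝ)).const_sub 1

lemma edgeWeight_antitone : Antitone edgeWeight := by
  intro m n h
  unfold edgeWeight
  gcongr

lemma edgeWeight_add_le_mul_sum_vertexMeasure {k : ℝ} (hk : 0 < k) (p : ℕ) :
    edgeWeight p + edgeWeight (2 * p + 2) ≤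
      4 * k / (p + 1) * ∑ n ∈ Icc (p + 1) (2 * p + 2), vertexMeasure k edgeWeight n := by
  have hmass : 1 / (2 * k * (p + 2)) ≤
      ∑ n ∈ Icc (p + 1) (2 * p + 2), vertexMeasure k edgeWeight n :=
    calc 1 / (2 * k * (p + 2)) = (∑ n ∈ Icc (p + 1) (2 * p + 2), edgeWeight n) / k := by
          rw [← Ico_add_one_right_eq_Icc, sum_Ico_edgeWeight (by omega)]
          push_cast
          field_simp
          ring
      _ = ∑ n ∈ Icc (p + 1) (2 * p + 2), edgeWeight n / k := sum_div _ _ _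
      _ ≤ _ := sum_le_sum fun n _ =>
          div_le_vertexMeasure hk (fun n => (edgeWeight_pos n).le) n
  calc edgeWeight p + edgeWeight (2 * p + 2) ≤ 2 * edgeWeight p := by
        linarith [edgeWeight_antitone (by omega : p ≤ 2 * p + 2)]
    _ = 4 * k / (p + 1) * (1 / (2 * k * (p + 2))) := by
        unfold edgeWeight
        field_simp
        ring
    _ ≤ _ := by gcongr

end PathDiagram

end

open PathDiagram in
theorem stmt5 (k : ℕ) (hk : 3 ≤ k) :
    ∃ a b μ : ℕ → ℝ,
      (∀ n, 0 < a n) ∧ (∀ n, 0 < b n) ∧ (∀ n, 0 < μ n) ∧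
      (∀ n, a n * μ n = b n * μ (n + 1)) ∧
      a 0 = k ∧ (∀ n, b n + a (n + 1) = k) ∧
      Summable μ ∧
      ∀ ε : ℝ, 0 < ε → ∃ S : Finset ℕ, S.Nonempty ∧
        (∑ n ∈ S, μ n) ≤ (∑' n, μ n) / 2 ∧
        (∑' n : ℕ, if (n ∈ S ∧ n + 1 ∉ S) ∨ (n ∉ S ∧ n + 1 ∈ S) then a n * μ n else 0)
          < ε * ∑ n ∈ S, μ n := by
  have hk₀ : (0 : ℝ) < k := by exact_mod_cast (by omega : 0 < k)
  set μ := vertexMeasure k edgeWeight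
  have hμ : ∀ n, 0 < μ n := vertexMeasure_pos hk₀ edgeWeight_pos
  have hvol : HasSum μ (2 * 1 / k) := hasSum_vertexMeasure hasSum_edgeWeight
  refine ⟨fun n => edgeWeight n / μ n, fun n => edgeWeight n / μ (n + 1), μ,
    fun n => div_pos (edgeWeight_pos n) (hμ n), fun n => div_pos (edgeWeight_pos n) (hμ (n + 1)),
    hμ, fun n => by simp only [div_mul_cancel₀ _ (hμ _).ne'],
    div_vertexMeasure_zero hk₀.ne' (edgeWeight_pos 0).ne',
    fun n => div_vertexMeasure_succ_add hk₀.ne' (add_pos (edgeWeight_pos n) (edgeWeight_pos _)).ne',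
    hvol.summable, fun ε hε => ?_⟩
  obtain ⟨p, hp⟩ := exists_nat_gt (4 * k / ε)
  have hratio : 4 * k / (p + 1) < ε := by
    rw [div_lt_iff₀ hε] at hp
    rw [div_lt_iff₀ (by positivity)]
    nlinarith
  have hp₀ : 0 < p := by exact_mod_cast (div_pos (by positivity) hε).trans hp
  have hS : (Icc (p + 1) (2 * p + 2)).Nonempty := nonempty_Icc.2 (by omega)
  refine ⟨Icc (p + 1) (2 * p + 2), hS, ?_, ?_⟩
  · rw [hvol.tsum_eq]
    exact sum_vertexMeasure_le_half hk₀ (fun n => (edgeWeight_pos n).le) hasSum_edgeWeight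
      (by norm_num [edgeWeight]) (by simp) (by simp; omega)
  · rw [tsum_ite_boundary_Icc _ (by omega), div_mul_cancel₀ _ (hμ _).ne',
      div_mul_cancel₀ _ (hμ _).ne']
    calc _ ≤ _ := edgeWeight_add_le_mul_sum_vertexMeasure hk₀ p
      _ < ε * _ := mul_lt_mul_of_pos_right hratio (sum_pos (fun n _ => hμ n) hS)
end

section
/- Let k > 1 be a real number, let s be a positive integer, and for each j ∈ {1, …, s} let μ_j : ℕ → ℝ be positive with μ_j(l+1) ≤ μ_j(l)/k for all l, and let w_j : ℕ → ℝ satisfy w_j(l) ≥ k·μ_j(l) for all l (w_j(l) is the measure of the edge joining positions l and l+1 on the j-th ray). Let S be a finite nonempty subset of {1, …, s} × ℕ such that (j, 0) ∉ S for every j. Then ∑ w_j(l) ≥ (k − 1)·∑_{(j,l) ∈ S} μ_j(l), where the first sum runs over all pairs (j, l) such that exactly one of (j, l), (j, l+1) belongs to S. -/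
/-!
Every point `(j, l)` of `S` lies in a maximal block `(j, a+1), …, (j, l), …` of `S` whose left
neighbour `(j, a)` is not in `S` (it exists because `(j, 0) ∉ S`), so `(j, a)–(j, a+1)` is a
boundary edge. Since `k μ_j(l+1) ≤ μ_j(l)`, we have `(k - 1) μ_j(l+1) ≤ μ_j(l) - μ_j(l+1)`, and
telescoping gives `(k - 1) ∑_{l > a} μ_j(l) ≤ μ_j(a) ≤ w_j(a)`. Summing over blocks proves the claim.
-/

open Finset

section Decay

variable {k : ℝ} {f : ℕ → ℝ}

theorem sub_one_mul_sum_Ioc_le_sub (hf : ∀ l, k * f (l + 1) ≤ f l) (a n : ℕ) :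
    (k - 1) * ∑ i ∈ Ioc a (a + n), f i ≤ f a - f (a + n) := by
  induction n with
  | zero => simp
  | succ n ih =>
    rw [← add_assoc, sum_Ioc_succ_top (Nat.le_add_right a n), mul_add]
    linarith [hf (a + n)]

theorem sub_one_mul_sum_le_of_forall_lt (hk : 1 ≤ k) (hf₀ : ∀ l, 0 ≤ f l)
    (hf : ∀ l, k * f (l + 1) ≤ f l) {T : Finset ℕ} {a : ℕ} (hT : ∀ i ∈ T, a < i) :
    (k - 1) * ∑ i ∈ T, f i ≤ f a := by
  have hsub : T ⊆ Ioc a (a + T.sup id) := fun i hi =>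
    mem_Ioc.2 ⟨hT i hi, (le_sup (f := id) hi).trans (Nat.le_add_left _ _)⟩
  calc (k - 1) * ∑ i ∈ T, f i
      ≤ (k - 1) * ∑ i ∈ Ioc a (a + T.sup id), f i :=
        mul_le_mul_of_nonneg_left (sum_le_sum_of_subset_of_nonneg hsub fun i _ _ => hf₀ i)
          (sub_nonneg.2 hk)
    _ ≤ f a - f (a + T.sup id) := sub_one_mul_sum_Ioc_le_sub hf a _
    _ ≤ f a := sub_le_self _ (hf₀ _)

end Decay

section Rays

variable {ι : Type*} [DecidableEq ι] (S : Finset (ι × ℕ))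

def lastGap (p : ι × ℕ) : ι × ℕ :=
  (p.1, Nat.findGreatest (fun m => (p.1, m) ∉ S) p.2)

def rayBoundaryWeight (w : ι → ℕ → ℝ) (p : ι × ℕ) : ℝ :=
  if (p ∈ S ∧ (p.1, p.2 + 1) ∉ S) ∨ (p ∉ S ∧ (p.1, p.2 + 1) ∈ S) then w p.1 p.2 else 0

variable {S}

@[simp]
theorem lastGap_fst (p : ι × ℕ) : (lastGap S p).1 = p.1 := rfl

theorem lastGap_notMem (h₀ : ∀ i, (i, 0) ∉ S) (p : ι × ℕ) : lastGap S p ∉ S :=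
  Nat.findGreatest_spec (P := fun m => (p.1, m) ∉ S) (Nat.zero_le _) (h₀ p.1)

theorem lastGap_snd_lt (h₀ : ∀ i, (i, 0) ∉ S) {p : ι × ℕ} (hp : p ∈ S) :
    (lastGap S p).2 < p.2 := by
  refine lt_of_le_of_ne (Nat.findGreatest_le _) fun heq => lastGap_notMem h₀ p ?_
  rwa [show lastGap S p = p from Prod.ext rfl heq]

theorem lastGap_succ_mem (h₀ : ∀ i, (i, 0) ∉ S) {p : ι × ℕ} (hp : p ∈ S) :
    ((lastGap S p).1, (lastGap S p).2 + 1) ∈ S := by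
  by_contra h
  exact Nat.findGreatest_is_greatest (Nat.lt_succ_self _) (lastGap_snd_lt h₀ hp) h

theorem rayBoundaryWeight_lastGap (w : ι → ℕ → ℝ) (h₀ : ∀ i, (i, 0) ∉ S) {p : ι × ℕ}
    (hp : p ∈ S) : rayBoundaryWeight S w (lastGap S p) = w p.1 (lastGap S p).2 :=
  if_pos (Or.inr ⟨lastGap_notMem h₀ p, lastGap_succ_mem h₀ hp⟩)

theorem rayBoundaryWeight_nonneg {w : ι → ℕ → ℝ} (hw : ∀ j l, 0 ≤ w j l) (p : ι × ℕ) :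
    0 ≤ rayBoundaryWeight S w p := by
  unfold rayBoundaryWeight
  split_ifs
  exacts [hw _ _, le_rfl]

theorem summable_rayBoundaryWeight (w : ι → ℕ → ℝ) : Summable (rayBoundaryWeight S w) := by
  refine summable_of_ne_finset_zero (s := S ∪ S.image fun p => (p.1, p.2 - 1)) fun p hp => ?_
  refine if_neg ?_
  rintro (⟨hpS, -⟩ | ⟨-, hsuccS⟩)
  · exact hp (mem_union_left _ hpS)
  · exact hp (mem_union_right _ (mem_image.2 ⟨_, hsuccS, by simp⟩))

theorem sub_one_mul_sum_fiber_lastGap_le {k : ℝ} {μ : ι → ℕ → ℝ} (hk : 1 ≤ k)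
    (hμ₀ : ∀ j l, 0 ≤ μ j l) (hμ : ∀ j l, k * μ j (l + 1) ≤ μ j l) (h₀ : ∀ i, (i, 0) ∉ S)
    (e : ι × ℕ) : (k - 1) * ∑ p ∈ S with lastGap S p = e, μ p.1 p.2 ≤ μ e.1 e.2 := by
  have hfst : ∀ p ∈ S.filter (lastGap S · = e), p.1 = e.1 := by
    intro p hp
    rw [← (mem_filter.1 hp).2, lastGap_fst]
  have hinj : Set.InjOn Prod.snd (S.filter (lastGap S · = e) : Set (ι × ℕ)) :=
    fun p hp q hq h => Prod.ext ((hfst p hp).trans (hfst q hq).symm) h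
  rw [sum_congr rfl fun p hp => by rw [hfst p hp], ← sum_image (f := μ e.1) hinj]
  refine sub_one_mul_sum_le_of_forall_lt hk (hμ₀ e.1) (hμ e.1) fun i hi => ?_
  obtain ⟨p, hp, rfl⟩ := mem_image.1 hi
  obtain ⟨hpS, rfl⟩ := mem_filter.1 hp
  exact lastGap_snd_lt h₀ hpS

end Rays

theorem stmt9_general (k : ℝ) (hk : 1 < k) (s : ℕ)
    (μ w : Fin s → ℕ → ℝ)
    (hμ_pos : ∀ j l, 0 < μ j l)
    (hμ_dec : ∀ j l, μ j (l + 1) ≤ μ j l / k)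
    (hw : ∀ j l, k * μ j l ≤ w j l)
    (S : Finset (Fin s × ℕ))
    (hS0 : ∀ j : Fin s, (j, 0) ∉ S) :
    (k - 1) * ∑ p ∈ S, μ p.1 p.2 ≤
      ∑' p : Fin s × ℕ,
        if (p ∈ S ∧ (p.1, p.2 + 1) ∉ S) ∨ (p ∉ S ∧ (p.1, p.2 + 1) ∈ S)
        then w p.1 p.2 else 0 := by
  have hμ₀ : ∀ j l, 0 ≤ μ j l := fun j l => (hμ_pos j l).le
  have hμ : ∀ j l, k * μ j (l + 1) ≤ μ j l := fun j l =>
    (le_div_iff₀' (by linarith)).1 (hμ_dec j l)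
  have hμw : ∀ j l, μ j l ≤ w j l := fun j l =>
    (le_mul_of_one_le_left (hμ₀ j l) hk.le).trans (hw j l)
  change _ ≤ ∑' p, rayBoundaryWeight S w p
  calc (k - 1) * ∑ p ∈ S, μ p.1 p.2
      = ∑ e ∈ S.image (lastGap S), (k - 1) * ∑ p ∈ S with lastGap S p = e, μ p.1 p.2 := by
        rw [← mul_sum, sum_fiberwise_of_maps_to fun p hp => mem_image_of_mem _ hp]
    _ ≤ ∑ e ∈ S.image (lastGap S), rayBoundaryWeight S w e := by
        refine sum_le_sum fun e he => ?_
        obtain ⟨p, hp, rfl⟩ := mem_image.1 he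
        rw [rayBoundaryWeight_lastGap w hS0 hp]
        exact (sub_one_mul_sum_fiber_lastGap_le hk.le hμ₀ hμ hS0 _).trans (hμw _ _)
    _ ≤ ∑' p, rayBoundaryWeight S w p :=
        (summable_rayBoundaryWeight w).sum_le_tsum _ fun p _ =>
          rayBoundaryWeight_nonneg (fun j l => (hμ₀ j l).trans (hμw j l)) p

theorem stmt9 (k : ℝ) (hk : 1 < k) (s : ℕ) (hs : 0 < s)
    (μ w : Fin s → ℕ → ℝ)
    (hμ_pos : ∀ j l, 0 < μ j l)
    (hμ_dec : ∀ j l, μ j (l + 1) ≤ μ j l / k)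
    (hw : ∀ j l, k * μ j l ≤ w j l)
    (S : Finset (Fin s × ℕ)) (hS_ne : S.Nonempty)
    (hS0 : ∀ j : Fin s, (j, 0) ∉ S) :
    (k - 1) * ∑ p ∈ S, μ p.1 p.2 ≤
      ∑' p : Fin s × ℕ,
        if (p ∈ S ∧ (p.1, p.2 + 1) ∉ S) ∨ (p ∉ S ∧ (p.1, p.2 + 1) ∈ S)
        then w p.1 p.2 else 0 :=
  stmt9_general k hk s μ w hμ_pos hμ_dec hw S hS0
end
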